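/- Let (Z_j, Z_k) be a centered bivariate Gaussian vector with unit variances and correlation ρ ∈ (−1, 1). Define the binary variable X_j = 1{Z_j > Δ_j} for a cutoff Δ_j ∈ ℝ and keep X_k = Z_k continuous. Then the population Kendall's tau of (X_j, Z_k) equals 4·Φ_2(Δ_j, 0; ρ/√2) − 2·Φ(Δ_j). (Bridging function for a continuous–binary pair, F_cb, from Theorem 1.) -/

import Mathlib

/-!
Write `b = 1{Z₀ > Δ}` and `s = sign (Z₁ - Z₁')`. Since `b - b' ∈ {-1, 0, 1}`, the Kendall
integrand is `b s + b' (-s)`, and exchanging the two copies swaps the two terms, so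
`τ = 2 E[b s]`. As `s` is antisymmetric, `E s = 0`, and since ties `Z₁ = Z₁'` are null,
`τ = 4 P(Z₀ ≤ Δ, Z₁ ≤ Z₁') - 2 P(Z₀ ≤ Δ)`. Conditionally on `Z₀ = x`, `Z₁ - Z₁'` is
`N(ρx, 2 - ρ²)`, so `(Z₀, (Z₁ - Z₁')/√2)` is a standard bivariate normal vector with correlation
`ρ/√2`, which gives the `Φ₂` term.
-/

open MeasureTheory ProbabilityTheory Real Matrix

noncomputable section

/-- Density of a centered multivariate Gaussian distribution on `ℝ^d`
with covariance matrix `S`. -/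
def mvGaussPDF {d : ℕ} (S : Matrix (Fin d) (Fin d) ℝ) (x : Fin d → ℝ) : ℝ :=
  (Real.sqrt ((2 * Real.pi) ^ d * S.det))⁻¹ * Real.exp (-(x ⬝ᵥ S⁻¹ *ᵥ x) / 2)

/-- Centered multivariate Gaussian measure on `ℝ^d` with covariance matrix `S`. -/
def mvGauss {d : ℕ} (S : Matrix (Fin d) (Fin d) ℝ) : Measure (Fin d → ℝ) :=
  MeasureTheory.volume.withDensity fun x => ENNReal.ofReal (mvGaussPDF S x)

/-- `Φ_d(a; S) = P(U₁ ≤ a₁, …, U_d ≤ a_d)` for a centered Gaussian vector `U` with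
covariance matrix `S`.  Extended-real bounds implement the conventions that a `+∞`
bound drops the corresponding constraint, while a `-∞` bound gives probability `0`. -/
def PhiVec {d : ℕ} (a : Fin d → EReal) (S : Matrix (Fin d) (Fin d) ℝ) : ℝ :=
  (mvGauss S {x | ∀ i, (x i : EReal) ≤ a i}).toReal

/-- Standard normal CDF `Φ`, with extended-real argument (`Φ(+∞) = 1`, `Φ(-∞) = 0`). -/
def stdPhi (a : EReal) : ℝ :=
  (gaussianReal 0 1 {x : ℝ | (x : EReal) ≤ a}).toReal

/-- The `2 × 2` correlation matrix with correlation `ρ`. -/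
def corrMat (ρ : ℝ) : Matrix (Fin 2) (Fin 2) ℝ := !![1, ρ; ρ, 1]

/-- Bivariate standard normal CDF `Φ₂(a, b; ρ)` with extended-real bounds. -/
def Phi2 (a b : EReal) (ρ : ℝ) : ℝ := PhiVec ![a, b] (corrMat ρ)

/-- The binary variable `1{z > Δ}` obtained by dichotomizing a latent variable `z`. -/
def binVar (Δ : ℝ) (z : ℝ) : ℝ := if Δ < z then 1 else 0

/-- The truncated variable `z · 1{z > Δ}` obtained by truncating a latent variable `z`. -/
def truncVar (Δ : ℝ) (z : ℝ) : ℝ := if Δ < z then z else 0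

/-- The ordinal variable `∑_{m=0}^{l-1} m · 1{Δ_m ≤ z < Δ_{m+1}}` obtained from a latent
variable `z` via extended-real cutoffs `Δ`. -/
def ordVar (l : ℕ) (Δ : ℕ → EReal) (z : ℝ) : ℝ :=
  ∑ m ∈ Finset.range l,
    (m : ℝ) * (if Δ m ≤ (z : EReal) ∧ (z : EReal) < Δ (m + 1) then 1 else 0)

open scoped NNReal ENNReal

@[fun_prop]
lemma Real.measurable_sign : Measurable Real.sign := by
  unfold Real.sign
  exact Measurable.ite measurableSet_Iio measurable_const <|
    Measurable.ite measurableSet_Ioi measurable_const measurable_const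

lemma Real.abs_sign_le_one (r : ℝ) : |Real.sign r| ≤ 1 := by
  rcases Real.sign_apply_eq r with h | h | h <;> simp [h]

section KendallTau

variable {α : Type*} [MeasurableSpace α]

def kendallTau (ν : Measure α) (u v : α → ℝ) : ℝ :=
  ∫ p, Real.sign ((u p.1 - u p.2) * (v p.1 - v p.2)) ∂ν.prod ν

lemma integral_sign_eq_kendallTau {Ω : Type*} [MeasurableSpace Ω] {μ : Measure Ω}
    [IsFiniteMeasure μ] {ν : Measure α} {W W' : Ω → α} (hW : Measurable W)
    (hW' : Measurable W') (hind : IndepFun W W' μ) (hWν : μ.map W = ν) (hW'ν : μ.map W' = ν)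
    {u v : α → ℝ} (hu : Measurable u) (hv : Measurable v) :
    ∫ ω, Real.sign ((u (W ω) - u (W' ω)) * (v (W ω) - v (W' ω))) ∂μ = kendallTau ν u v := by
  have hpair : μ.map (fun ω => (W ω, W' ω)) = ν.prod ν := by
    rw [(indepFun_iff_map_prod_eq_prod_map_map hW.aemeasurable hW'.aemeasurable).1 hind,
      hWν, hW'ν]
  have hsign : Measurable fun p : α × α => Real.sign ((u p.1 - u p.2) * (v p.1 - v p.2)) := by
    fun_prop
  rw [kendallTau, ← hpair,
    integral_map (hW.prodMk hW').aemeasurable hsign.aestronglyMeasurable]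

lemma prod_self_setOf_eq_eq_zero {ν : Measure α} [SFinite ν] {v : α → ℝ} (hv : Measurable v)
    (hatoms : ∀ t, ν (v ⁻¹' {t}) = 0) : ν.prod ν {p | v p.1 = v p.2} = 0 := by
  have hsection : ∀ x, ν (Prod.mk x ⁻¹' {p : α × α | v p.1 = v p.2}) = 0 := fun x => by
    convert hatoms (v x) using 2
    ext y
    simp [eq_comm]
  rw [Measure.prod_apply (measurableSet_eq_fun (f := fun p : α × α => v p.1)
    (g := fun p => v p.2) (by fun_prop) (by fun_prop))]
  exact (lintegral_congr hsection).trans lintegral_zero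

lemma kendallTau_indicator_one {ν : Measure α} [IsProbabilityMeasure ν] {B : Set α}
    (hB : MeasurableSet B) {v : α → ℝ} (hv : Measurable v)
    (hties : ν.prod ν {p | v p.1 = v p.2} = 0) :
    kendallTau ν (B.indicator 1) v
      = 4 * (ν.prod ν {p | p.1 ∉ B ∧ v p.1 ≤ v p.2}).toReal - 2 * (ν Bᶜ).toReal := by
  set s : α × α → ℝ := fun p => Real.sign (v p.1 - v p.2)
  set g : α × α → ℝ := fun p => B.indicator 1 p.1 * s p
  set E := {p : α × α | p.1 ∉ B ∧ v p.1 ≤ v p.2}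
  have hs : Measurable s := by fun_prop
  have hE : MeasurableSet E :=
    (hB.compl.preimage measurable_fst).inter
      (measurableSet_le (hv.comp measurable_fst) (hv.comp measurable_snd))
  have hbounded {f : α × α → ℝ} (hf : Measurable f) (hf1 : ∀ p, |f p| ≤ 1) :
      Integrable f (ν.prod ν) :=
    Integrable.of_bound hf.aestronglyMeasurable 1 (ae_of_all _ hf1)
  have hg_int : Integrable g (ν.prod ν) := by
    refine hbounded ((measurable_one.indicator hB).comp measurable_fst |>.mul hs) fun p => ?_
    by_cases h : p.1 ∈ B <;> simp [g, s, h, Real.abs_sign_le_one]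
  have hs_int : Integrable s (ν.prod ν) := hbounded hs fun p => Real.abs_sign_le_one _
  have hcompl_int : Integrable (fun p : α × α => Bᶜ.indicator 1 p.1) (ν.prod ν) :=
    (integrable_const (1 : ℝ)).indicator hB.compl |>.comp_fst ν
  have hE_int : Integrable (E.indicator 1) (ν.prod ν) := (integrable_const (1 : ℝ)).indicator hE
  have hs_antisymm : ∀ p, s p.swap = - s p := fun p => by
    simp only [s, Prod.fst_swap, Prod.snd_swap]
    rw [← Real.sign_neg, neg_sub]
  have hs_zero : ∫ p, s p ∂ν.prod ν = 0 := by
    have hswap : ∫ p, s p ∂ν.prod ν = - ∫ p, s p ∂ν.prod ν := by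
      rw [← integral_neg, ← integral_prod_swap]
      simp only [hs_antisymm]
    linarith
  have hsplit : kendallTau ν (B.indicator 1) v = 2 * ∫ p, g p ∂ν.prod ν := calc
    _ = ∫ p, (g p + g p.swap) ∂ν.prod ν := by
      refine integral_congr_ae (ae_of_all _ fun p => ?_)
      have hflip : Real.sign (v p.2 - v p.1) = - s p := hs_antisymm p
      simp only [g, Prod.fst_swap, hs_antisymm]
      by_cases h1 : p.1 ∈ B <;> by_cases h2 : p.2 ∈ B <;> simp [s, h1, h2, hflip]
    _ = 2 * ∫ p, g p ∂ν.prod ν := by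
      rw [integral_add hg_int (hg_int.swap : Integrable (fun p => g p.swap) _),
        integral_prod_swap g, two_mul]
  have hg_ae : g =ᵐ[ν.prod ν] fun p => s p - Bᶜ.indicator 1 p.1 + 2 * E.indicator 1 p := by
    filter_upwards [measure_eq_zero_iff_ae_notMem.1 hties] with p hp
    by_cases h1 : p.1 ∈ B
    · simp [g, E, h1]
    · rcases lt_or_gt_of_ne (hp : v p.1 ≠ v p.2) with h | h
      · norm_num [g, s, E, h1, h.le, Real.sign_of_neg (sub_neg.2 h)]
      · simp [g, s, E, h1, h.not_ge, Real.sign_of_pos (sub_pos.2 h)]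
  have hcompl : ∫ p, Bᶜ.indicator (1 : α → ℝ) p.1 ∂ν.prod ν = (ν Bᶜ).toReal := by
    rw [integral_fun_fst, integral_indicator_one hB.compl]
    simp [Measure.real]
  have hE_integral : ∫ p, E.indicator (1 : α × α → ℝ) p ∂ν.prod ν = (ν.prod ν E).toReal :=
    integral_indicator_one hE
  rw [hsplit, integral_congr_ae hg_ae,
    integral_add (f := fun p => s p - Bᶜ.indicator 1 p.1) (hs_int.sub hcompl_int)
      (hE_int.const_mul 2),
    integral_sub hs_int hcompl_int, integral_const_mul, hs_zero, hcompl, hE_integral]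
  ring

end KendallTau

namespace ProbabilityTheory

lemma gaussianReal_zero_map_const_add (m : ℝ) (w : ℝ≥0) :
    (gaussianReal 0 w).map (m + ·) = gaussianReal m w := by
  rw [gaussianReal_map_const_add, zero_add]

lemma lintegral_gaussianReal_apply (m : ℝ) (v w : ℝ≥0) {B : Set ℝ} (hB : MeasurableSet B) :
    ∫⁻ x, gaussianReal x w B ∂gaussianReal m v = gaussianReal m (v + w) B := by
  have hconv := gaussianReal_conv_gaussianReal (m₁ := m) (m₂ := 0) (v₁ := v) (v₂ := w)
  rw [add_zero] at hconv
  rw [← hconv, ← lintegral_indicator_one hB,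
    Measure.lintegral_conv (measurable_one.indicator hB)]
  refine lintegral_congr fun x => ?_
  rw [← gaussianReal_zero_map_const_add x w, ← lintegral_indicator_one hB,
    lintegral_map (measurable_one.indicator hB) (by fun_prop)]

lemma measurable_gaussianReal_apply (w : ℝ≥0) {B : Set ℝ} (hB : MeasurableSet B) :
    Measurable fun m => gaussianReal m w B := by
  have hsection : (fun m => gaussianReal m w B)
      = fun m => gaussianReal 0 w (Prod.mk m ⁻¹' {p : ℝ × ℝ | p.1 + p.2 ∈ B}) := by
    ext m
    rw [← gaussianReal_zero_map_const_add m w, Measure.map_apply (measurable_const_add m) hB]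
    rfl
  rw [hsection]
  exact measurable_measure_prodMk_left (measurable_add hB)

lemma lintegral_gaussianReal_const_mul_apply (c : ℝ) {v w : ℝ≥0} (hv : (v : ℝ) = c ^ 2 + w)
    {B : Set ℝ} (hB : MeasurableSet B) :
    ∫⁻ x, gaussianReal (c * x) w B ∂gaussianReal 0 1 = gaussianReal 0 v B := by
  have hmap := gaussianReal_map_const_mul (μ := 0) (v := 1) c
  rw [mul_zero, mul_one] at hmap
  rw [← lintegral_map (measurable_gaussianReal_apply w hB) (by fun_prop), hmap,
    lintegral_gaussianReal_apply 0 _ w hB]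
  congr
  ext
  simp [hv]

lemma gaussianReal_Ici_eq (t : ℝ) :
    gaussianReal 0 1 (Set.Ici t) = gaussianReal t 1 (Set.Iic 0) := by
  rw [← sub_zero t, ← gaussianReal_map_const_sub t,
    Measure.map_apply (by fun_prop) measurableSet_Iic]
  congr 1
  ext x
  simp

lemma gaussianReal_const_mul_Iic_zero {c : ℝ} (hc : 0 < c) (m : ℝ) {v w : ℝ≥0}
    (hw : (w : ℝ) = c ^ 2 * v) :
    gaussianReal (c * m) w (Set.Iic 0) = gaussianReal m v (Set.Iic 0) := by
  have hmap := gaussianReal_map_const_mul (μ := m) (v := v) c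
  have hvar : (.mk (c ^ 2) (sq_nonneg c) * v : ℝ≥0) = w := NNReal.eq (by simp [hw])
  rw [hvar] at hmap
  rw [← hmap, Measure.map_apply (by fun_prop) measurableSet_Iic]
  congr 1
  ext y
  simp [hc]

lemma lintegral_gaussianReal_eq_lintegral_gaussianPDF_mul (m : ℝ) {v : ℝ≥0} (hv : v ≠ 0)
    (g : ℝ → ℝ≥0∞) : ∫⁻ y, g y ∂gaussianReal m v = ∫⁻ y, gaussianPDF m v y * g y := by
  rw [gaussianReal_of_var_ne_zero _ hv, lintegral_withDensity_eq_lintegral_mul_non_measurable _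
    (measurable_gaussianPDF m v) (ae_of_all _ fun _ => gaussianPDF_lt_top)]
  rfl

end ProbabilityTheory

lemma corrMat_det (ρ : ℝ) : (corrMat ρ).det = 1 - ρ ^ 2 := by
  rw [corrMat, Matrix.det_fin_two_of]
  ring

lemma dotProduct_corrMat_inv_mulVec {ρ : ℝ} (hρ : 1 - ρ ^ 2 ≠ 0) (z : Fin 2 → ℝ) :
    z ⬝ᵥ (corrMat ρ)⁻¹ *ᵥ z = (z 0 ^ 2 - 2 * ρ * z 0 * z 1 + z 1 ^ 2) / (1 - ρ ^ 2) := by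
  rw [Matrix.inv_def, corrMat_det, corrMat, Matrix.adjugate_fin_two_of]
  simp only [dotProduct, mulVec, Ring.inverse_eq_inv', Matrix.smul_apply, of_apply, cons_val',
    cons_val_fin_one, smul_eq_mul, Fin.sum_univ_two, cons_val_zero, cons_val_one, mul_one,
    mul_neg, neg_mul]
  field_simp
  ring

lemma mvGaussPDF_corrMat {ρ : ℝ} (hρ : ρ ∈ Set.Ioo (-1 : ℝ) 1) (z : Fin 2 → ℝ) :
    mvGaussPDF (corrMat ρ) z
      = gaussianPDFReal 0 1 (z 0) * gaussianPDFReal (ρ * z 0) (1 - ρ ^ 2).toNNReal (z 1) := by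
  have hv : 0 < 1 - ρ ^ 2 := by nlinarith [hρ.1, hρ.2]
  rw [mvGaussPDF, corrMat_det, dotProduct_corrMat_inv_mulVec hv.ne', gaussianPDFReal,
    gaussianPDFReal, Real.coe_toNNReal _ hv.le, mul_mul_mul_comm, ← mul_inv,
    ← Real.sqrt_mul (by positivity), ← Real.exp_add]
  congr 2
  · congr 1
    push_cast
    ring
  · field_simp
    push_cast
    ring

lemma lintegral_mvGauss_corrMat {ρ : ℝ} (hρ : ρ ∈ Set.Ioo (-1 : ℝ) 1)
    {f : (Fin 2 → ℝ) → ℝ≥0∞} (hf : Measurable f) :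
    ∫⁻ z, f z ∂mvGauss (corrMat ρ)
      = ∫⁻ x, ∫⁻ y, f ![x, y] ∂gaussianReal (ρ * x) (1 - ρ ^ 2).toNNReal ∂gaussianReal 0 1 := by
  set v := (1 - ρ ^ 2).toNNReal
  have hv : v ≠ 0 := by
    simp only [v, ne_eq, Real.toNNReal_eq_zero, not_le]
    nlinarith [hρ.1, hρ.2]
  set density : ℝ × ℝ → ℝ≥0∞ := fun p => gaussianPDF 0 1 p.1 * gaussianPDF (ρ * p.1) v p.2
  have hdensity : Measurable density := by
    simp only [density, gaussianPDF, gaussianPDFReal]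
    fun_prop
  have hpdf : (fun z => ENNReal.ofReal (mvGaussPDF (corrMat ρ) z))
      = density ∘ MeasurableEquiv.finTwoArrow := by
    ext z
    rw [mvGaussPDF_corrMat hρ, ENNReal.ofReal_mul (gaussianPDFReal_nonneg _ _ _)]
    rfl
  rw [mvGauss, hpdf, lintegral_withDensity_eq_lintegral_mul _
      (hdensity.comp MeasurableEquiv.finTwoArrow.measurable) hf,
    ← (volume_preserving_finTwoArrow ℝ).symm.lintegral_comp_emb
      MeasurableEquiv.finTwoArrow.symm.measurableEmbedding,
    Measure.volume_eq_prod]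
  simp only [Pi.mul_apply, Function.comp_apply, MeasurableEquiv.apply_symm_apply]
  rw [lintegral_prod (fun p => density p * f (MeasurableEquiv.finTwoArrow.symm p))
      (hdensity.mul (hf.comp MeasurableEquiv.finTwoArrow.symm.measurable)).aemeasurable,
    lintegral_gaussianReal_eq_lintegral_gaussianPDF_mul 0 one_ne_zero]
  refine lintegral_congr fun x => ?_
  rw [lintegral_gaussianReal_eq_lintegral_gaussianPDF_mul _ hv,
    ← lintegral_const_mul' _ _ gaussianPDF_ne_top]
  refine lintegral_congr fun y => ?_
  simp only [density, mul_assoc]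
  rfl

lemma lintegral_indicator_mul_mvGauss_corrMat {ρ : ℝ} (hρ : ρ ∈ Set.Ioo (-1 : ℝ) 1)
    {B : Set ℝ} (hB : MeasurableSet B) {h : ℝ → ℝ≥0∞} (hh : Measurable h) :
    ∫⁻ z, B.indicator 1 (z 0) * h (z 1) ∂mvGauss (corrMat ρ)
      = ∫⁻ x in B, ∫⁻ y, h y ∂gaussianReal (ρ * x) (1 - ρ ^ 2).toNNReal ∂gaussianReal 0 1 := by
  rw [lintegral_mvGauss_corrMat hρ (by fun_prop), ← lintegral_indicator hB]
  refine lintegral_congr fun x => ?_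
  simp only [Matrix.cons_val_zero, Matrix.cons_val_one]
  rw [lintegral_const_mul _ hh]
  by_cases hx : x ∈ B <;> simp [hx]

lemma mvGauss_corrMat_map_eval_zero {ρ : ℝ} (hρ : ρ ∈ Set.Ioo (-1 : ℝ) 1) :
    (mvGauss (corrMat ρ)).map (· 0) = gaussianReal 0 1 := by
  ext B hB
  have hdisint := lintegral_indicator_mul_mvGauss_corrMat hρ hB measurable_one
  simp only [Pi.one_apply, mul_one, lintegral_const, measure_univ, one_mul,
    Measure.restrict_apply_univ] at hdisint
  rw [← lintegral_indicator_one hB,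
    lintegral_map (measurable_one.indicator hB) (measurable_pi_apply 0), hdisint]

lemma mvGauss_corrMat_map_eval_one {ρ : ℝ} (hρ : ρ ∈ Set.Ioo (-1 : ℝ) 1) :
    (mvGauss (corrMat ρ)).map (· 1) = gaussianReal 0 1 := by
  ext B hB
  have hdisint := lintegral_indicator_mul_mvGauss_corrMat hρ MeasurableSet.univ
    (measurable_one.indicator hB)
  simp only [Set.indicator_univ, Pi.one_apply, one_mul, Measure.restrict_univ,
    lintegral_indicator_one hB] at hdisint
  have hv : ((1 : ℝ≥0) : ℝ) = ρ ^ 2 + (1 - ρ ^ 2).toNNReal := by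
    rw [Real.coe_toNNReal _ (by nlinarith [hρ.1, hρ.2])]
    simp
  rw [← lintegral_indicator_one hB,
    lintegral_map (measurable_one.indicator hB) (measurable_pi_apply 1), hdisint,
    lintegral_gaussianReal_const_mul_apply ρ hv hB]

lemma isProbabilityMeasure_mvGauss_corrMat {ρ : ℝ} (hρ : ρ ∈ Set.Ioo (-1 : ℝ) 1) :
    IsProbabilityMeasure (mvGauss (corrMat ρ)) := by
  have : IsProbabilityMeasure ((mvGauss (corrMat ρ)).map (· 0)) := by
    rw [mvGauss_corrMat_map_eval_zero hρ]
    infer_instance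
  exact Measure.isProbabilityMeasure_of_map (· 0)

lemma div_sqrt_two_mem_Ioo {ρ : ℝ} (hρ : ρ ∈ Set.Ioo (-1 : ℝ) 1) :
    ρ / √2 ∈ Set.Ioo (-1 : ℝ) 1 := by
  have hsqrt2 : 1 < √2 := by
    rw [Real.lt_sqrt zero_le_one]
    norm_num
  constructor
  · rw [lt_div_iff₀ (by positivity)]
    nlinarith [hρ.1]
  · rw [div_lt_one (by positivity)]
    linarith [hρ.2]

lemma prod_mvGauss_corrMat_apply {ρ : ℝ} (hρ : ρ ∈ Set.Ioo (-1 : ℝ) 1) (Δ : ℝ) :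
    ((mvGauss (corrMat ρ)).prod (mvGauss (corrMat ρ))) {p | p.1 0 ≤ Δ ∧ p.1 1 ≤ p.2 1}
      = mvGauss (corrMat (ρ / √2)) {z | z 0 ≤ Δ ∧ z 1 ≤ 0} := by
  have := isProbabilityMeasure_mvGauss_corrMat hρ
  have hr := div_sqrt_two_mem_Ioo hρ
  set r := ρ / √2
  set S := {p : (Fin 2 → ℝ) × (Fin 2 → ℝ) | p.1 0 ≤ Δ ∧ p.1 1 ≤ p.2 1}
  have hsection : ∀ z : Fin 2 → ℝ, mvGauss (corrMat ρ) (Prod.mk z ⁻¹' S)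
      = (Set.Iic Δ).indicator 1 (z 0) * gaussianReal (z 1) 1 (Set.Iic 0) := by
    intro z
    by_cases hz : z 0 ≤ Δ
    · have hS : Prod.mk z ⁻¹' S = (· 1) ⁻¹' Set.Ici (z 1) := by
        ext y
        simp [S, hz]
      rw [hS, ← Measure.map_apply (measurable_pi_apply 1) measurableSet_Ici,
        mvGauss_corrMat_map_eval_one hρ, gaussianReal_Ici_eq]
      simp [hz]
    · have hS : Prod.mk z ⁻¹' S = ∅ := by
        ext y
        simp [S, hz]
      simp [hS, hz]
  have hquadrant : ∀ z : Fin 2 → ℝ, {z : Fin 2 → ℝ | z 0 ≤ Δ ∧ z 1 ≤ 0}.indicator 1 z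
      = (Set.Iic Δ).indicator 1 (z 0) * (Set.Iic (0 : ℝ)).indicator (1 : ℝ → ℝ≥0∞) (z 1) := by
    intro z
    by_cases h0 : z 0 ≤ Δ <;> by_cases h1 : z 1 ≤ 0 <;> simp [h0, h1]
  -- Given `Z₀ = x`, `Z₁ - Z₁' ∼ N(ρx, (1 - ρ²) + 1)`, the image under `√2 •` of the conditional
  -- law `N(rx, 1 - r²)` of the second coordinate for correlation `r`.
  have hvar : (((1 - ρ ^ 2).toNNReal + 1 : ℝ≥0) : ℝ) = √2 ^ 2 * (1 - r ^ 2).toNNReal := by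
    rw [NNReal.coe_add, Real.coe_toNNReal _ (by nlinarith [hρ.1, hρ.2]),
      Real.coe_toNNReal _ (by nlinarith [hr.1, hr.2]), Real.sq_sqrt zero_le_two, div_pow,
      Real.sq_sqrt zero_le_two]
    push_cast
    ring
  rw [Measure.prod_apply (by measurability), ← lintegral_indicator_one (by measurability)]
  simp_rw [hsection, hquadrant]
  rw [lintegral_indicator_mul_mvGauss_corrMat hρ measurableSet_Iic
      (measurable_gaussianReal_apply 1 measurableSet_Iic),
    lintegral_indicator_mul_mvGauss_corrMat hr measurableSet_Iic
      (measurable_one.indicator measurableSet_Iic)]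
  refine setLIntegral_congr_fun measurableSet_Iic fun x _ => ?_
  rw [lintegral_gaussianReal_apply _ _ _ measurableSet_Iic,
    lintegral_indicator_one measurableSet_Iic,
    ← gaussianReal_const_mul_Iic_zero (by positivity) (r * x) hvar]
  congr 2
  simp only [r]
  field_simp

lemma Phi2_coe (a b ρ : ℝ) :
    Phi2 a b ρ = (mvGauss (corrMat ρ) {z | z 0 ≤ a ∧ z 1 ≤ b}).toReal := by
  simp [Phi2, PhiVec, Fin.forall_fin_two]

lemma stdPhi_coe (a : ℝ) : stdPhi a = (gaussianReal 0 1 (Set.Iic a)).toReal := by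
  simp only [stdPhi, EReal.coe_le_coe_iff]
  rfl

/-- bridging function for a continuous–binary pair,
`F_cb(ρ; Δⱼ) = 4Φ₂(Δⱼ, 0; ρ/√2) − 2Φ(Δⱼ)` (Theorem 1). -/
theorem kendall_tau_continuous_binary
    {Ω : Type*} [MeasurableSpace Ω] (μ : Measure Ω) [IsProbabilityMeasure μ]
    (ρ : ℝ) (hρ : ρ ∈ Set.Ioo (-1 : ℝ) 1) (Δj : ℝ)
    (Z Z' : Ω → Fin 2 → ℝ) (hZm : Measurable Z) (hZ'm : Measurable Z')
    (hZ : Measure.map Z μ = mvGauss (corrMat ρ))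
    (hZ' : Measure.map Z' μ = mvGauss (corrMat ρ))
    (hind : IndepFun Z Z' μ) :
    ∫ ω, Real.sign ((binVar Δj (Z ω 0) - binVar Δj (Z' ω 0)) *
        (Z ω 1 - Z' ω 1)) ∂μ
      = 4 * Phi2 (Δj : EReal) ((0 : ℝ) : EReal) (ρ / Real.sqrt 2)
          - 2 * stdPhi (Δj : EReal) := by
  set ν := mvGauss (corrMat ρ)
  have := isProbabilityMeasure_mvGauss_corrMat hρ
  have hbin : (fun z : Fin 2 → ℝ => binVar Δj (z 0)) = {z | Δj < z 0}.indicator 1 := by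
    ext z
    simp [binVar, Set.indicator_apply]
  have hties : ν.prod ν {p | p.1 1 = p.2 1} = 0 := by
    refine prod_self_setOf_eq_eq_zero (v := fun z : Fin 2 → ℝ => z 1) (measurable_pi_apply 1)
      fun t => ?_
    rw [← Measure.map_apply (measurable_pi_apply 1) (measurableSet_singleton t),
      mvGauss_corrMat_map_eval_one hρ]
    exact gaussianReal_absolutelyContinuous 0 one_ne_zero Real.volume_singleton
  have hlower : ν {z | Δj < z 0}ᶜ = gaussianReal 0 1 (Set.Iic Δj) := by
    rw [← mvGauss_corrMat_map_eval_zero hρ,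
      Measure.map_apply (measurable_pi_apply 0) measurableSet_Iic]
    congr 1
    ext z
    simp
  rw [integral_sign_eq_kendallTau (u := fun z => binVar Δj (z 0)) (v := (· 1)) hZm hZ'm hind
      hZ hZ' (by measurability) (measurable_pi_apply 1), hbin,
    kendallTau_indicator_one (measurableSet_lt measurable_const (measurable_pi_apply 0))
      (measurable_pi_apply 1) hties, hlower]
  simp only [Set.mem_ofPred_eq, not_lt]
  rw [prod_mvGauss_corrMat_apply hρ, Phi2_coe, stdPhi_coe]
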